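/- arXiv:1005.0078 — 5 statements merged into one kernel-verified Lean document; each statement's English description precedes it below -/
import Mathlib

section
/- For every d ≥ 3, the polynomial map f_d: ℂ² → ℂ² given by f_d(x,y) = (x + y + xy, x^{d-1} y) is proper and has topological degree d. -/
/-!
Write `f(x, y) = (s, t)`, so that `y (1 + x) = s - x` and `xⁿ y = t` with `n = d - 1`.

Properness: if `s` and `t` are bounded, `|x|` is bounded (for large `|x|`, `|x y| ≤ |t|` forces
`|y|` small and then `|x| ≤ |s| + |y| + |x y|` fails), and then `|y|` is bounded by `|t| / |x|ⁿ`
when `|x| ≥ 1/2` and by `|s - x| / |1 + x|` otherwise.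

Degree: for `s ≠ -1` the fibre over `(s, t)` is in bijection with the roots of
`g = Xⁿ⁺¹ - s Xⁿ + t X + t`, via `x ↦ (x, (s - x) / (1 + x))`. Away from `s = -1` and the zero
locus of the resultant of `g` and `g'`, a polynomial in `(s, t)`, the polynomial `g` is separable
and the fibre has `n + 1 = d` points. That resultant is not the zero polynomial because
`X^(n+1) + X + 1` is separable.
-/

/-- A proper map `f : ℂ² → ℂ²` has topological degree `d` if, away from an
algebraic curve (containing the branch locus), every fiber has exactly `d`
points. -/
def HasTopDegree (f : ℂ × ℂ → ℂ × ℂ) (d : ℕ) : Prop :=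
  ∃ P : MvPolynomial (Fin 2) ℂ, P ≠ 0 ∧
    ∀ p : ℂ × ℂ, MvPolynomial.eval ![p.1, p.2] P ≠ 0 → (f ⁻¹' {p}).ncard = d

open Polynomial

def sumProdMap {R : Type*} [CommRing R] (n : ℕ) (p : R × R) : R × R :=
  (p.1 + p.2 + p.1 * p.2, p.1 ^ n * p.2)

section Properness

variable {𝕜 : Type*} [NormedField 𝕜] {n : ℕ} {x y : 𝕜} {C : ℝ}

theorem norm_fst_le_of_sumProdMap (hn : n ≠ 0) (hs : ‖x + y + x * y‖ ≤ C)
    (ht : ‖x ^ n * y‖ ≤ C) : ‖x‖ ≤ 2 * C + 3 := by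
  by_contra! hx
  have hC : 0 ≤ C := (norm_nonneg _).trans hs
  have hx1 : 1 ≤ ‖x‖ := by linarith
  have hxy : ‖x‖ * ‖y‖ ≤ C := calc
    ‖x‖ * ‖y‖ ≤ ‖x‖ ^ n * ‖y‖ := by gcongr; exact le_self_pow₀ hx1 hn
    _ ≤ C := by simpa [norm_mul, norm_pow] using ht
  have hxs : ‖x‖ ≤ C + ‖y‖ + ‖x‖ * ‖y‖ := calc
    ‖x‖ = ‖(x + y + x * y) - (y + x * y)‖ := by ring_nf
    _ ≤ ‖x + y + x * y‖ + (‖y‖ + ‖x * y‖) :=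
      (norm_sub_le _ _).trans (by gcongr; exact norm_add_le _ _)
    _ ≤ C + ‖y‖ + ‖x‖ * ‖y‖ := by rw [norm_mul]; linarith
  nlinarith

theorem norm_snd_le_of_sumProdMap (hs : ‖x + y + x * y‖ ≤ C) (ht : ‖x ^ n * y‖ ≤ C) :
    ‖y‖ ≤ 2 ^ n * C + 2 * (C + ‖x‖) := by
  have hC : 0 ≤ C := (norm_nonneg _).trans hs
  rcases le_or_gt (1 / 2) ‖x‖ with hx | hx
  · have : (1 / 2) ^ n * ‖y‖ ≤ C := calc
      (1 / 2) ^ n * ‖y‖ ≤ ‖x‖ ^ n * ‖y‖ := by gcongr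
      _ ≤ C := by simpa [norm_mul, norm_pow] using ht
    have : ‖y‖ ≤ 2 ^ n * C := by
      rwa [one_div, inv_pow, inv_mul_le_iff₀ (by positivity)] at this
    linarith
  · have h1x : 1 / 2 ≤ ‖1 + x‖ := calc
      1 / 2 ≤ ‖(1 : 𝕜)‖ - ‖x‖ := by rw [norm_one]; linarith
      _ ≤ ‖1 + x‖ := by simpa using norm_sub_norm_le (1 : 𝕜) (-x)
    have : ‖y‖ * ‖1 + x‖ ≤ C + ‖x‖ := calc
      ‖y‖ * ‖1 + x‖ = ‖(x + y + x * y) - x‖ := by rw [← norm_mul]; ring_nf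
      _ ≤ C + ‖x‖ := (norm_sub_le _ _).trans (by linarith)
    nlinarith [norm_nonneg y, pow_nonneg (zero_le_two : (0 : ℝ) ≤ 2) n]

theorem isCompact_preimage_sumProdMap [ProperSpace 𝕜] (hn : n ≠ 0) {K : Set (𝕜 × 𝕜)}
    (hK : IsCompact K) : IsCompact (sumProdMap n ⁻¹' K) := by
  obtain ⟨C, hC⟩ := isBounded_iff_forall_norm_le.mp hK.isBounded
  refine Metric.isCompact_of_isClosed_isBounded
    (hK.isClosed.preimage (by unfold sumProdMap; fun_prop)) ?_
  refine isBounded_iff_forall_norm_le.mpr ⟨2 ^ n * C + 2 * (C + (2 * C + 3)), ?_⟩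
  rintro ⟨x, y⟩ hp
  have hs : ‖x + y + x * y‖ ≤ C := (norm_fst_le _).trans (hC _ hp)
  have ht : ‖x ^ n * y‖ ≤ C := (norm_snd_le _).trans (hC _ hp)
  have hx := norm_fst_le_of_sumProdMap hn hs ht
  have hy := norm_snd_le_of_sumProdMap hs ht
  have hC0 : 0 ≤ C := (norm_nonneg _).trans hs
  have : 0 ≤ 2 ^ n * C := by positivity
  rw [Prod.norm_mk]
  exact max_le (by linarith) (by linarith)

end Properness

section FiberPolynomial

variable {R : Type*} [CommRing R] (n : ℕ)

/-- On the fibre over `(s, t)`, `y (1 + x) = s - x` turns `xⁿ y = t` into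
`xⁿ (x - s) + t (x + 1) = 0`. -/
noncomputable def fiberPoly (s t : R) : R[X] :=
  X ^ (n + 1) - C s * X ^ n + C t * X + C t

theorem eval_fiberPoly (s t x : R) :
    (fiberPoly n s t).eval x = x ^ n * (x - s) + t * (x + 1) := by
  simp only [fiberPoly, eval_add, eval_sub, eval_mul, eval_pow, eval_C, eval_X]
  ring

theorem fiberPoly_map {S : Type*} [CommRing S] (φ : R →+* S) (s t : R) :
    (fiberPoly n s t).map φ = fiberPoly n (φ s) (φ t) := by
  simp [fiberPoly]

theorem natDegree_fiberPoly [Nontrivial R] {n : ℕ} (hn : n ≠ 0) (s t : R) :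
    (fiberPoly n s t).natDegree = n + 1 := by
  unfold fiberPoly
  compute_degree!
  simp [hn]

noncomputable def fiberResultant : MvPolynomial (Fin 2) R :=
  resultant (fiberPoly n (.X 0) (.X 1)) (derivative (fiberPoly n (.X 0) (.X 1))) (n + 1) n

theorem eval_fiberResultant (s t : R) :
    MvPolynomial.eval ![s, t] (fiberResultant n) =
      resultant (fiberPoly n s t) (derivative (fiberPoly n s t)) (n + 1) n := by
  rw [fiberResultant, ← resultant_map_map, ← derivative_map, fiberPoly_map, MvPolynomial.eval_X,
    MvPolynomial.eval_X]
  rfl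

end FiberPolynomial

section Fibers

variable {K : Type*} [Field K] {n : ℕ} {s t : K}

theorem eval_neg_one_fiberPoly_ne_zero (hs : s ≠ -1) : (fiberPoly n s t).eval (-1) ≠ 0 := by
  rw [eval_fiberPoly]
  have : -1 - s ≠ 0 := fun h => hs (by linear_combination -h)
  simpa using this

theorem resultant_fiberPoly_ne_zero_iff [CharZero K] (hn : n ≠ 0) :
    resultant (fiberPoly n s t) (derivative (fiberPoly n s t)) (n + 1) n ≠ 0 ↔
      (fiberPoly n s t).Separable := by
  have hdeg := natDegree_fiberPoly hn s t
  have hdeg' : (derivative (fiberPoly n s t)).natDegree = n := by simp [hdeg]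
  have hne : fiberPoly n s t ≠ 0 := fun h => by simp [h] at hdeg
  have := resultant_eq_zero_iff (f := fiberPoly n s t) (g := derivative (fiberPoly n s t))
  rw [hdeg, hdeg'] at this
  simp [this, hne, separable_def]

theorem preimage_sumProdMap_singleton (hs : s ≠ -1) :
    sumProdMap n ⁻¹' {(s, t)} =
      (fun x => (x, (s - x) / (1 + x))) '' (fiberPoly n s t).rootSet K := by
  have hne : fiberPoly n s t ≠ 0 := fun h =>
    eval_neg_one_fiberPoly_ne_zero (t := t) hs (by rw [h, eval_zero])
  ext ⟨x, y⟩
  simp only [Set.mem_preimage, sumProdMap, Set.mem_singleton_iff, Prod.mk.injEq, Set.mem_image,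
    mem_rootSet_of_ne hne, coe_aeval_eq_eval]
  constructor
  · rintro ⟨rfl, rfl⟩
    have hx : 1 + x ≠ 0 := fun h => by
      obtain rfl : x = -1 := by linear_combination h
      simp at hs
    refine ⟨x, by rw [eval_fiberPoly]; ring, rfl, ?_⟩
    field_simp
    ring
  · rintro ⟨x, hroot, rfl, rfl⟩
    have hx : 1 + x ≠ 0 := fun h => by
      obtain rfl : x = -1 := by linear_combination h
      exact eval_neg_one_fiberPoly_ne_zero hs hroot
    rw [eval_fiberPoly] at hroot
    constructor
    · field_simp
      ring
    · rw [mul_div_assoc', div_eq_iff hx]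
      linear_combination -hroot

theorem ncard_preimage_sumProdMap_singleton [IsAlgClosed K] (hn : n ≠ 0) (hs : s ≠ -1)
    (hsep : (fiberPoly n s t).Separable) : (sumProdMap n ⁻¹' {(s, t)}).ncard = n + 1 := by
  rw [preimage_sumProdMap_singleton hs,
    Set.ncard_image_of_injective _ fun a b h => congrArg Prod.fst h, ← Nat.card_coe_set_eq,
    Nat.card_eq_fintype_card, card_rootSet_eq_natDegree hsep (IsAlgClosed.splits _),
    natDegree_fiberPoly hn]

end Fibers

/-- A common root `u` of `X^(n+1) + X + 1` and its derivative has `n u = -(n + 1)`, hence `|u| > 1`,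
which is incompatible with `(n + 1) uⁿ = -1`. -/
theorem separable_fiberPoly_zero_one {n : ℕ} (hn : n ≠ 0) :
    (fiberPoly n (0 : ℂ) 1).Separable := by
  rw [separable_def, isCoprime_iff_aeval_ne_zero_of_isAlgClosed ℂ ℂ]
  intro u
  by_contra! ⟨hg, hg'⟩
  simp only [fiberPoly, map_zero, zero_mul, sub_zero, map_one, one_mul, coe_aeval_eq_eval,
    eval_add, eval_pow, eval_X, eval_one, derivative_X_pow_succ, map_add,
    map_natCast, derivative_X, derivative_one, add_zero, eval_mul, eval_natCast] at hg hg'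
  have hu : (n : ℂ) * u = -((n + 1 : ℕ) : ℂ) := by
    push_cast
    linear_combination (n + 1 : ℂ) * hg - u * hg'
  have hu' : ((n + 1 : ℕ) : ℂ) * u ^ n = -1 := by
    push_cast
    linear_combination hg'
  replace hu := congrArg norm hu
  replace hu' := congrArg norm hu'
  simp only [norm_mul, norm_pow, norm_neg, norm_one, Complex.norm_natCast] at hu hu'
  push_cast at hu hu'
  have hn1 : (1 : ℝ) ≤ n := by exact_mod_cast Nat.one_le_iff_ne_zero.mpr hn
  have hu1 : 1 ≤ ‖u‖ := by nlinarith
  nlinarith [one_le_pow₀ (n := n) hu1]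

theorem hasTopDegree_sumProdMap {n : ℕ} (hn : n ≠ 0) : HasTopDegree (sumProdMap n) (n + 1) := by
  have heval (s t : ℂ) : MvPolynomial.eval ![s, t] ((.X 0 + 1) * fiberResultant n) =
      (s + 1) * resultant (fiberPoly n s t) (derivative (fiberPoly n s t)) (n + 1) n := by
    rw [map_mul, eval_fiberResultant, map_add, map_one, MvPolynomial.eval_X]
    rfl
  refine ⟨(.X 0 + 1) * fiberResultant n, fun h => ?_, fun ⟨s, t⟩ h => ?_⟩
  · have hres := (resultant_fiberPoly_ne_zero_iff hn).mpr (separable_fiberPoly_zero_one hn)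
    have h01 := heval 0 1
    rw [h, map_zero, zero_add, one_mul] at h01
    exact hres h01.symm
  · rw [heval] at h
    obtain ⟨hs, hres⟩ := mul_ne_zero_iff.mp h
    exact ncard_preimage_sumProdMap_singleton hn (by rintro rfl; simp at hs)
      ((resultant_fiberPoly_ne_zero_iff hn).mp hres)

/-- For every `d ≥ 3`, the polynomial map
`f_d(x,y) = (x + y + xy, x^{d-1} y)` is proper and has topological degree `d`. -/
theorem stmt_2 (d : ℕ) (hd : 3 ≤ d) :
    (∀ K : Set (ℂ × ℂ), IsCompact K →
      IsCompact ((fun p : ℂ × ℂ => (p.1 + p.2 + p.1 * p.2, p.1 ^ (d - 1) * p.2)) ⁻¹' K)) ∧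
    HasTopDegree (fun p : ℂ × ℂ => (p.1 + p.2 + p.1 * p.2, p.1 ^ (d - 1) * p.2)) d := by
  obtain ⟨n, rfl⟩ : ∃ n, d = n + 1 := ⟨d - 1, by omega⟩
  have hn : n ≠ 0 := by omega
  exact ⟨fun K hK => isCompact_preimage_sumProdMap hn hK, hasTopDegree_sumProdMap hn⟩
end

section
/- For d ≥ 3 and a ≥ 2, the polynomial map f_{d,a}: ℂ² → ℂ² given by f_{d,a}(x,y) = (x, y^d − d x^a y) is proper of topological degree d. -/
/-!
Properness: on a fibre `x = const` the term `y ^ d` dominates `c(x) * y` for `d ≥ 2`, so `y` stays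
bounded over a compact set. Degree: the fibre over `(x, w)` is the root set of the trinomial
`y ^ d - c * y - w` with `c = d * x ^ a`. A double root `z` forces `c = d * z ^ (d - 1)` and
`w = (1 - d) * z ^ d`; eliminating `z` shows that the trinomial has `d` distinct roots off the curve
`d ^ d * w ^ (d - 1) = (1 - d) ^ (d - 1) * c ^ d`.
-/

open Polynomial

theorem norm_le_of_norm_pow_sub_mul_le {𝕜 : Type*} [NormedField 𝕜] {d : ℕ} (hd : 2 ≤ d)
    {y c : 𝕜} {M : ℝ} (h : ‖y ^ d - c * y‖ ≤ M) : ‖y‖ ≤ max 1 (M + ‖c‖) := by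
  refine (le_or_gt ‖y‖ 1).elim (fun hy => le_max_of_le_left hy) fun hy => le_max_of_le_right ?_
  have hM : 0 ≤ M := (norm_nonneg _).trans h
  have hsq : ‖y‖ ^ 2 ≤ M + ‖c‖ * ‖y‖ :=
    calc ‖y‖ ^ 2 ≤ ‖y‖ ^ d := pow_le_pow_right₀ hy.le hd
      _ = ‖(y ^ d - c * y) + c * y‖ := by rw [sub_add_cancel, norm_pow]
      _ ≤ M + ‖c‖ * ‖y‖ := (norm_add_le _ _).trans (by rw [norm_mul]; gcongr)
  nlinarith

theorem isCompact_preimage_pow_sub_mul {X 𝕜 : Type*} [TopologicalSpace X] [T2Space X]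
    [NormedField 𝕜] [ProperSpace 𝕜] {d : ℕ} (hd : 2 ≤ d) {c : X → 𝕜} (hc : Continuous c)
    {K : Set (X × 𝕜)} (hK : IsCompact K) :
    IsCompact ((fun p : X × 𝕜 => (p.1, p.2 ^ d - c p.1 * p.2)) ⁻¹' K) := by
  obtain ⟨M, hM⟩ := hK.exists_bound_of_continuousOn continuous_snd.continuousOn
  have hK₁ := hK.image continuous_fst
  obtain ⟨C, hC⟩ := hK₁.exists_bound_of_continuousOn hc.continuousOn
  refine (hK₁.prod (isCompact_closedBall 0 (max 1 (M + C)))).of_isClosed_subset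
    (hK.isClosed.preimage (by fun_prop)) fun p hp => ⟨⟨_, hp, rfl⟩, ?_⟩
  rw [mem_closedBall_zero_iff]
  exact (norm_le_of_norm_pow_sub_mul_le hd (hM _ hp)).trans
    (max_le_max le_rfl (add_le_add le_rfl (hC _ ⟨_, hp, rfl⟩)))

theorem ncard_preimage_fiberwise_singleton {X Y Z : Type*} (g : X → Y → Z) (x : X) (z : Z) :
    ((fun p : X × Y => (p.1, g p.1 p.2)) ⁻¹' {(x, z)}).ncard = {y | g x y = z}.ncard := by
  have hfiber :
      (fun p : X × Y => (p.1, g p.1 p.2)) ⁻¹' {(x, z)} = Prod.mk x '' {y | g x y = z} := by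
    ext ⟨u, v⟩
    aesop
  rw [hfiber, Set.ncard_image_of_injective _ (Prod.mk_right_injective x)]

theorem discr_eq_of_isRoot_of_isRoot_derivative {R : Type*} [CommRing R] {d : ℕ} {c w z : R}
    (hz : z ^ d - c * z - w = 0) (hz' : d * z ^ (d - 1) - c = 0) :
    (d : R) ^ d * w ^ (d - 1) = (1 - d) ^ (d - 1) * c ^ d := by
  rcases d with _ | d
  · simp
  obtain rfl : c = (d + 1) * z ^ d := by push_cast at hz'; linear_combination -hz'
  obtain rfl : w = -d * z ^ (d + 1) := by linear_combination -hz
  push_cast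
  simp only [mul_pow, ← pow_mul]
  ring

theorem nodup_roots_X_pow_sub_C_mul_X_add_C {R : Type*} [CommRing R] [IsDomain R] {d : ℕ}
    {c w : R} (h : (d : R) ^ d * w ^ (d - 1) ≠ (1 - d) ^ (d - 1) * c ^ d) :
    (X ^ d - (C c * X + C w)).roots.Nodup := by
  classical
  set q : R[X] := X ^ d - (C c * X + C w)
  rcases eq_or_ne q 0 with hq | hq
  · simp [hq]
  refine Multiset.nodup_iff_count_le_one.mpr fun z => ?_
  by_contra! hz
  rw [count_roots, one_lt_rootMultiplicity_iff_isRoot hq] at hz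
  obtain ⟨hz, hz'⟩ := hz
  refine h (discr_eq_of_isRoot_of_isRoot_derivative (z := z) ?_ ?_)
  · simpa [q, sub_sub] using hz
  · simpa [q, derivative_X_pow] using hz'

theorem ncard_setOf_pow_sub_mul_eq {K : Type*} [Field K] [IsAlgClosed K] {d : ℕ} (hd : 2 ≤ d)
    {c w : K} (h : (d : K) ^ d * w ^ (d - 1) ≠ (1 - d) ^ (d - 1) * c ^ d) :
    {y : K | y ^ d - c * y = w}.ncard = d := by
  classical
  set q : K[X] := X ^ d - (C c * X + C w)
  have hdeg : q.natDegree = d := by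
    rw [natDegree_sub_eq_left_of_natDegree_lt] <;> rw [natDegree_X_pow]
    exact natDegree_linear_le.trans_lt (by omega)
  have hq : q ≠ 0 := ne_zero_of_natDegree_gt (n := 0) (by omega)
  have hroots : {y : K | y ^ d - c * y = w} = q.roots.toFinset := by
    ext y
    simp [q, mem_roots hq, sub_eq_iff_eq_add']
  rw [hroots, Set.ncard_coe_finset, Multiset.toFinset_card_of_nodup
    (nodup_roots_X_pow_sub_C_mul_X_add_C h), IsAlgClosed.card_roots_eq_natDegree, hdeg]

theorem stmt_3_general (d a : ℕ) (hd : 3 ≤ d) :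
    (∀ K : Set (ℂ × ℂ), IsCompact K →
      IsCompact ((fun p : ℂ × ℂ => (p.1, p.2 ^ d - (d : ℂ) * p.1 ^ a * p.2)) ⁻¹' K)) ∧
    HasTopDegree (fun p : ℂ × ℂ => (p.1, p.2 ^ d - (d : ℂ) * p.1 ^ a * p.2)) d := by
  refine ⟨fun K => isCompact_preimage_pow_sub_mul (c := fun x => (d : ℂ) * x ^ a) (by omega)
    (by fun_prop), ?_⟩
  have hd0 : (d : ℂ) ^ d ≠ 0 := pow_ne_zero _ (Nat.cast_ne_zero.mpr (by omega))
  set P : MvPolynomial (Fin 2) ℂ := MvPolynomial.C ((d : ℂ) ^ d) * MvPolynomial.X 1 ^ (d - 1) -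
    MvPolynomial.C ((1 - d : ℂ) ^ (d - 1) * d ^ d) * MvPolynomial.X 0 ^ (a * d)
  have eval_P (x w : ℂ) : MvPolynomial.eval ![x, w] P =
      (d : ℂ) ^ d * w ^ (d - 1) - (1 - d) ^ (d - 1) * (d * x ^ a) ^ d := by
    simp only [P, map_sub, map_mul, map_pow, MvPolynomial.eval_C, MvPolynomial.eval_X,
      Matrix.cons_val_zero, Matrix.cons_val_one, Matrix.cons_val_fin_one]
    ring
  refine ⟨P, fun h0 => hd0 ?_, fun ⟨x, w⟩ hxw => ?_⟩
  · have h00 := eval_P 0 0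
    have h01 := eval_P 0 1
    rw [h0, map_zero, zero_pow (by omega), mul_zero] at h00
    rw [h0, map_zero, one_pow, mul_one] at h01
    linear_combination h00 - h01
  · rw [eval_P, sub_ne_zero] at hxw
    rw [ncard_preimage_fiberwise_singleton (fun x y => y ^ d - (d : ℂ) * x ^ a * y)]
    exact ncard_setOf_pow_sub_mul_eq (by omega) hxw

/-- For `d ≥ 3` and `a ≥ 2`, the polynomial map
`f_{d,a}(x,y) = (x, y^d − d x^a y)` is proper of topological degree `d`. -/
theorem stmt_3 (d a : ℕ) (hd : 3 ≤ d) (ha : 2 ≤ a) :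
    (∀ K : Set (ℂ × ℂ), IsCompact K →
      IsCompact ((fun p : ℂ × ℂ => (p.1, p.2 ^ d - (d : ℂ) * p.1 ^ a * p.2)) ⁻¹' K)) ∧
    HasTopDegree (fun p : ℂ × ℂ => (p.1, p.2 ^ d - (d : ℂ) * p.1 ^ a * p.2)) d :=
  stmt_3_general d a hd
end

section
/- For d ≥ 3, if a ≠ b (with a, b ≥ 2), then the maps f_{d,a}(x,y) = (x, y^d − d x^a y) and f_{d,b}(x,y) = (x, y^d − d x^b y) are not equivalent, i.e., there do not exist polynomial automorphisms Φ₁, Φ₂ of ℂ² with f_{d,b} = Φ₂ ∘ f_{d,a} ∘ Φ₁. -/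
open MvPolynomial

/-- `f : ℂ² → ℂ²` is a polynomial map. -/
def IsPolyMap (f : ℂ × ℂ → ℂ × ℂ) : Prop :=
  ∃ P Q : MvPolynomial (Fin 2) ℂ, ∀ p : ℂ × ℂ,
    f p = (MvPolynomial.eval ![p.1, p.2] P, MvPolynomial.eval ![p.1, p.2] Q)

/-- A polynomial automorphism of `ℂ²`: a bijection which is a polynomial map
with polynomial inverse. -/
def IsPolyAut (Φ : ℂ × ℂ ≃ ℂ × ℂ) : Prop :=
  IsPolyMap Φ ∧ IsPolyMap Φ.symm

noncomputable section StmtFiveAux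

abbrev RR := MvPolynomial (Fin 2) ℂ

/-! ### Basic polynomial-map calculus -/

lemma eval_aeval' (v : Fin 2 → ℂ) (n : Fin 2 → RR) (F : RR) :
    eval v (aeval n F) = eval (fun i => eval v (n i)) F := by
  induction F using MvPolynomial.induction_on with
  | C c => simp
  | add p q hp hq => simp only [map_add, hp, hq]
  | mul_X p i hp => simp only [map_mul, aeval_X, eval_X, hp]

lemma aeval_aeval' (m n : Fin 2 → RR) (F : RR) :
    aeval n (aeval m F) = aeval (fun i => aeval n (m i)) F := by
  induction F using MvPolynomial.induction_on with
  | C c => simp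
  | add p q hp hq => simp only [map_add, hp, hq]
  | mul_X p i hp => simp only [map_mul, aeval_X, hp]

lemma pderiv_aeval' (i : Fin 2) (n : Fin 2 → RR) (F : RR) :
    pderiv i (aeval n F) =
      aeval n (pderiv 0 F) * pderiv i (n 0) + aeval n (pderiv 1 F) * pderiv i (n 1) := by
  induction F using MvPolynomial.induction_on with
  | C c => simp
  | add p q hp hq =>
    simp only [map_add, hp, hq]; ring
  | mul_X p j hp =>
    rw [map_mul, aeval_X, pderiv_mul, hp, pderiv_mul]
    fin_cases j <;>
      simp [pderiv_X_self, pderiv_X_of_ne (show (0:Fin 2) ≠ 1 by decide),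
        pderiv_X_of_ne (show (1:Fin 2) ≠ 0 by decide), map_mul, aeval_X] <;> ring

/-- Jacobian determinant of a polynomial map -/
def jac (m : Fin 2 → RR) : RR :=
  pderiv 0 (m 0) * pderiv 1 (m 1) - pderiv 1 (m 0) * pderiv 0 (m 1)

lemma jac_pc (m n : Fin 2 → RR) :
    jac (fun i => aeval n (m i)) = aeval n (jac m) * jac n := by
  unfold jac
  rw [pderiv_aeval', pderiv_aeval', pderiv_aeval', pderiv_aeval']
  simp only [jac, map_sub, map_mul]
  ring

lemma jac_X : jac (fun i => (X i : RR)) = 1 := by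
  simp [jac, pderiv_X_self, pderiv_X_of_ne (show (0:Fin 2) ≠ 1 by decide),
    pderiv_X_of_ne (show (1:Fin 2) ≠ 0 by decide)]

lemma vec_eta (v : Fin 2 → ℂ) : ![v 0, v 1] = v := by
  funext i; fin_cases i <;> simp

/-- From a pointwise inverse pair of polynomial maps, the polynomial compositions are `X i`. -/
lemma comp_eq_X (f g : ℂ × ℂ → ℂ × ℂ) (m n : Fin 2 → RR)
    (hf : ∀ p : ℂ × ℂ, f p = (eval ![p.1, p.2] (m 0), eval ![p.1, p.2] (m 1)))
    (hg : ∀ p : ℂ × ℂ, g p = (eval ![p.1, p.2] (n 0), eval ![p.1, p.2] (n 1)))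
    (hfg : ∀ p, f (g p) = p) :
    ∀ i, aeval n (m i) = X i := by
  intro i
  apply MvPolynomial.funext
  intro v
  rw [eval_X, eval_aeval']
  have hq : g (v 0, v 1) = (eval v (n 0), eval v (n 1)) := by
    rw [hg (v 0, v 1)]; simp [vec_eta]
  have hvec : (fun j => eval v (n j)) = ![(g (v 0, v 1)).1, (g (v 0, v 1)).2] := by
    rw [hq]; funext j; fin_cases j <;> simp
  rw [hvec]
  have h2 := hf (g (v 0, v 1))
  rw [hfg (v 0, v 1)] at h2
  fin_cases i
  · exact (congrArg Prod.fst h2).symm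
  · exact (congrArg Prod.snd h2).symm

/-! ### Concrete ideal facts -/

lemma cc_zero_of_mem {M N : ℕ} {p : RR}
    (hp : p ∈ Ideal.span {(X 0 : RR) ^ (M+1), X 1 ^ (N+1)}) :
    constantCoeff p = 0 := by
  rw [Ideal.mem_span_pair] at hp
  obtain ⟨u, v, rfl⟩ := hp
  simp [constantCoeff_X]

lemma mem_span_X_of_cc_zero (p : RR) (h : constantCoeff p = 0) :
    p ∈ Ideal.span {(X 0 : RR), X 1} := by
  have key : ∀ q : RR, q - C (constantCoeff q) ∈ Ideal.span {(X 0 : RR), X 1} := by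
    intro q
    induction q using MvPolynomial.induction_on with
    | C c => simp
    | add p q hp hq =>
      have := Ideal.add_mem _ hp hq
      simpa [map_add, C_add, sub_add_sub_comm] using this
    | mul_X p i hp =>
      have hXi : (X i : RR) ∈ Ideal.span {(X 0 : RR), X 1} := by
        fin_cases i
        · exact Ideal.subset_span (by simp)
        · exact Ideal.subset_span (by simp)
      have : p * X i - C (constantCoeff (p * X i)) = p * X i := by
        simp [map_mul, constantCoeff_X]
      rw [this]
      exact Ideal.mul_mem_left _ _ hXi
  have := key p
  rwa [h, map_zero, sub_zero] at this

lemma pow_mem_span {M N : ℕ} {p : RR} (hp : p ∈ Ideal.span {(X 0 : RR), X 1}) :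
    p ^ (M + N + 1) ∈ Ideal.span {(X 0 : RR) ^ (M+1), X 1 ^ (N+1)} := by
  rw [Ideal.mem_span_pair] at hp
  obtain ⟨u, v, rfl⟩ := hp
  rw [add_pow]
  refine Ideal.sum_mem _ ?_
  intro i hi
  simp only [Finset.mem_range] at hi
  by_cases hiM : M + 1 ≤ i
  · have hdvd : (X 0 : RR) ^ (M+1) ∣
        (u * X 0) ^ i * (v * X 1) ^ (M + N + 1 - i) * ((M+N+1).choose i : RR) := by
      have : (X 0 : RR) ^ (M+1) ∣ (u * X 0) ^ i := by
        rw [mul_pow]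
        exact Dvd.dvd.mul_left (pow_dvd_pow _ hiM) _
      exact (this.mul_right _).mul_right _
    obtain ⟨w, hw⟩ := hdvd
    rw [hw]
    exact Ideal.mul_mem_right _ _ (Ideal.subset_span (by simp))
  · push_neg at hiM
    have hjN : N + 1 ≤ M + N + 1 - i := by omega
    have hdvd : (X 1 : RR) ^ (N+1) ∣
        (u * X 0) ^ i * (v * X 1) ^ (M + N + 1 - i) * ((M+N+1).choose i : RR) := by
      have : (X 1 : RR) ^ (N+1) ∣ (v * X 1) ^ (M + N + 1 - i) := by
        rw [mul_pow]
        exact Dvd.dvd.mul_left (pow_dvd_pow _ hjN) _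
      exact (this.mul_left _).mul_right _
    obtain ⟨w, hw⟩ := hdvd
    rw [hw]
    exact Ideal.mul_mem_right _ _ (Ideal.subset_span (by simp))

lemma coeff_X0_X1 (i j : ℕ) (s : Fin 2 →₀ ℕ) :
    coeff s ((X 0 : RR) ^ i * X 1 ^ j) =
      if Finsupp.single 0 i + Finsupp.single 1 j = s then 1 else 0 := by
  rw [X_pow_eq_monomial, X_pow_eq_monomial, monomial_mul, one_mul, coeff_monomial]

lemma coeff_witness (B N : ℕ) :
    coeff (Finsupp.single (0:Fin 2) B + Finsupp.single 1 N) ((X 0 + X 1 : RR) ^ (B + N)) =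
      ((B+N).choose B : ℂ) := by
  rw [add_pow, coeff_sum, Finset.sum_eq_single B]
  · rw [show ((B+N).choose B : RR) = C (((B+N).choose B : ℂ)) by simp,
      mul_comm, coeff_C_mul, Nat.add_sub_cancel_left, coeff_X0_X1, if_pos rfl, mul_one]
  · intro i _ hiB
    rw [show ((B+N).choose i : RR) = C (((B+N).choose i : ℂ)) by simp,
      mul_comm, coeff_C_mul, coeff_X0_X1, if_neg, mul_zero]
    intro h
    have h0 := DFunLike.congr_fun h (0 : Fin 2)
    simp [Finsupp.single_apply] at h0
    exact hiB h0
  · intro h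
    exact absurd (Finset.mem_range.2 (by omega)) h

lemma notMem_witness (B N : ℕ) :
    (X 0 + X 1 : RR) ^ (B + N) ∉ Ideal.span {(X 0 : RR) ^ (B+1), X 1 ^ (N+1)} := by
  intro hmem
  rw [Ideal.mem_span_pair] at hmem
  obtain ⟨u, v, huv⟩ := hmem
  have h1 := congrArg (coeff (Finsupp.single (0:Fin 2) B + Finsupp.single 1 N)) huv
  rw [coeff_witness] at h1
  rw [coeff_add] at h1
  rw [X_pow_eq_monomial, X_pow_eq_monomial, coeff_mul_monomial', coeff_mul_monomial'] at h1
  rw [if_neg, if_neg] at h1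
  · simp at h1
    have hpos : 0 < (B+N).choose B := Nat.choose_pos (by omega)
    have : ((B+N).choose B : ℂ) ≠ 0 := Nat.cast_ne_zero.2 hpos.ne'
    exact this h1.symm
  · intro hle
    have := hle 1
    simp [Finsupp.single_apply] at this
  · intro hle
    have := hle 0
    simp [Finsupp.single_apply] at this

/-! ### The key lemma -/

set_option maxHeartbeats 2000000 in
lemma key (δ α γ : ℕ) :
    ¬ ∃ Φ₁ Φ₂ : ℂ × ℂ ≃ ℂ × ℂ, IsPolyAut Φ₁ ∧ IsPolyAut Φ₂ ∧
      ∀ p : ℂ × ℂ,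
        (p.1, p.2 ^ (δ+3) - ((δ+3 : ℕ) : ℂ) * p.1 ^ (α+γ+3) * p.2) =
          Φ₂ ((fun q : ℂ × ℂ =>
            (q.1, q.2 ^ (δ+3) - ((δ+3 : ℕ) : ℂ) * q.1 ^ (α+2) * q.2)) (Φ₁ p)) := by
  rintro ⟨Φ₁, Φ₂, ⟨⟨P0, P1, hP⟩, ⟨Q0, Q1, hQ⟩⟩, ⟨⟨R0, R1, hR⟩, ⟨S0, S1, hS⟩⟩, heq⟩
  set dd : ℂ := ((δ+3 : ℕ) : ℂ) with hdd
  set nP : Fin 2 → RR := ![P0, P1] with hnP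
  set nQ : Fin 2 → RR := ![Q0, Q1] with hnQ
  set nR : Fin 2 → RR := ![R0, R1] with hnR
  set nS : Fin 2 → RR := ![S0, S1] with hnS
  have hP' : ∀ p : ℂ × ℂ, Φ₁ p = (eval ![p.1,p.2] (nP 0), eval ![p.1,p.2] (nP 1)) := by
    intro p; rw [hP p]; simp [hnP]
  have hQ' : ∀ p : ℂ × ℂ, Φ₁.symm p = (eval ![p.1,p.2] (nQ 0), eval ![p.1,p.2] (nQ 1)) := by
    intro p; rw [hQ p]; simp [hnQ]
  have hR' : ∀ p : ℂ × ℂ, Φ₂ p = (eval ![p.1,p.2] (nR 0), eval ![p.1,p.2] (nR 1)) := by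
    intro p; rw [hR p]; simp [hnR]
  have hS' : ∀ p : ℂ × ℂ, Φ₂.symm p = (eval ![p.1,p.2] (nS 0), eval ![p.1,p.2] (nS 1)) := by
    intro p; rw [hS p]; simp [hnS]
  -- composition identities
  have hPQ : ∀ i, aeval nP (nQ i) = X i :=
    comp_eq_X Φ₁.symm Φ₁ nQ nP hQ' hP' (fun p => Φ₁.symm_apply_apply p)
  have hQP : ∀ i, aeval nQ (nP i) = X i :=
    comp_eq_X Φ₁ Φ₁.symm nP nQ hP' hQ' (fun p => Φ₁.apply_symm_apply p)
  have hRS : ∀ i, aeval nR (nS i) = X i :=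
    comp_eq_X Φ₂.symm Φ₂ nS nR hS' hR' (fun p => Φ₂.symm_apply_apply p)
  -- the "pullback" inverse identities
  have hτσ : ∀ F : RR, aeval nQ (aeval nP F) = F := by
    intro F
    rw [aeval_aeval', show (fun i => aeval nQ (nP i)) = fun i : Fin 2 => (X i : RR) from
      funext hQP]
    exact aeval_X_left_apply F
  have hστ : ∀ F : RR, aeval nP (aeval nQ F) = F := by
    intro F
    rw [aeval_aeval', show (fun i => aeval nP (nQ i)) = fun i : Fin 2 => (X i : RR) from
      funext hPQ]
    exact aeval_X_left_apply F
  -- source and target maps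
  set Ga : Fin 2 → RR := ![X 0, X 1 ^ (δ+3) - C dd * X 0 ^ (α+2) * X 1] with hGa
  set Gb : Fin 2 → RR := ![X 0, X 1 ^ (δ+3) - C dd * X 0 ^ (α+γ+3) * X 1] with hGb
  set Fm : Fin 2 → RR := fun i => aeval nP (Ga i) with hFm
  -- main polynomial identity
  have hmain : ∀ i, Gb i = aeval Fm (nR i) := by
    intro i
    apply MvPolynomial.funext
    intro v
    have hu : Φ₁ (v 0, v 1) = (eval v (nP 0), eval v (nP 1)) := by
      rw [hP' (v 0, v 1)]; simp [vec_eta]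
    have hz : (fun j => eval v (Fm j)) =
        ![(Φ₁ (v 0, v 1)).1,
          (Φ₁ (v 0, v 1)).2 ^ (δ+3) - dd * (Φ₁ (v 0, v 1)).1 ^ (α+2) * (Φ₁ (v 0, v 1)).2] := by
      funext j
      have h1 : eval v (Fm j) = eval (fun k => eval v (nP k)) (Ga j) :=
        eval_aeval' v nP (Ga j)
      have h2 : (fun k => eval v (nP k)) = ![(Φ₁ (v 0, v 1)).1, (Φ₁ (v 0, v 1)).2] := by
        rw [hu]; funext k; fin_cases k <;> simp
      rw [h1, h2]
      fin_cases j <;> simp [hGa]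
    have hR2 := hR' ((Φ₁ (v 0, v 1)).1,
          (Φ₁ (v 0, v 1)).2 ^ (δ+3) - dd * (Φ₁ (v 0, v 1)).1 ^ (α+2) * (Φ₁ (v 0, v 1)).2)
    simp only [] at hR2
    have hheq := heq (v 0, v 1)
    simp only [] at hheq
    have hcomb := hheq.trans hR2
    rw [eval_aeval', hz]
    fin_cases i
    · have := congrArg Prod.fst hcomb
      simp only [] at this
      simpa [hGb] using this
    · have := congrArg Prod.snd hcomb
      simp only [] at this
      simpa [hGb] using this
  -- Jacobians
  have hGbjac : jac Gb = C dd * ((X 1:RR) ^ (δ+2) - X 0 ^ (α+γ+2+1)) := by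
    have h1 : jac Gb = ((δ+3:ℕ):RR) * X 1 ^ (δ+2) - C dd * X 0 ^ (α+γ+2+1) := by
      unfold jac
      simp [hGb, pderiv_pow, pderiv_mul, pderiv_X_self,
        pderiv_X_of_ne (show (1:Fin 2) ≠ 0 by decide),
        pderiv_X_of_ne (show (0:Fin 2) ≠ 1 by decide)]
    rw [h1, ← C_eq_coe_nat, ← hdd]
    ring
  have hGajac : jac Ga = C dd * ((X 1:RR) ^ (δ+2) - X 0 ^ (α+1+1)) := by
    have h1 : jac Ga = ((δ+3:ℕ):RR) * X 1 ^ (δ+2) - C dd * X 0 ^ (α+1+1) := by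
      unfold jac
      simp [hGa, pderiv_pow, pderiv_mul, pderiv_X_self,
        pderiv_X_of_ne (show (1:Fin 2) ≠ 0 by decide),
        pderiv_X_of_ne (show (0:Fin 2) ≠ 1 by decide)]
    rw [h1, ← C_eq_coe_nat, ← hdd]
    ring
  -- units
  have hwP : aeval nP (jac nQ) * jac nP = 1 := by
    have h := jac_pc nQ nP
    rw [show (fun i => aeval nP (nQ i)) = fun i : Fin 2 => (X i : RR) from funext hPQ,
      jac_X] at h
    exact h.symm
  have hvR : aeval nR (jac nS) * jac nR = 1 := by
    have h := jac_pc nS nR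
    rw [show (fun i => aeval nR (nS i)) = fun i : Fin 2 => (X i : RR) from funext hRS,
      jac_X] at h
    exact h.symm
  -- notations
  set g : RR := X 1 ^ (δ+2) - X 0 ^ (α+1+1) with hg
  set hbp : RR := X 1 ^ (δ+2) - X 0 ^ (α+γ+2+1) with hhbp
  set U : RR := aeval Fm (jac nR) * jac nP with hU
  set V : RR := aeval Fm (aeval nR (jac nS)) * aeval nP (jac nQ) with hV
  set A : RR := aeval nP (pderiv 0 g) with hA
  set B : RR := aeval nP (pderiv 1 g) with hB
  set σg : RR := aeval nP g with hσg
  have hdd0 : dd ≠ 0 := by rw [hdd]; exact_mod_cast Nat.succ_ne_zero (δ+2)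
  have hCdd : (C dd : RR) ≠ 0 := by simpa using hdd0
  -- main chain identity
  have hbeq : hbp = U * σg := by
    have e1 : jac Gb = aeval Fm (jac nR) * jac Fm := by
      rw [show Gb = fun i => aeval Fm (nR i) from funext hmain]
      exact jac_pc nR Fm
    have e2 : jac Fm = aeval nP (jac Ga) * jac nP := by
      rw [hFm]; exact jac_pc Ga nP
    have e3 : aeval nP (jac Ga) = C dd * σg := by
      rw [hGajac, map_mul, aeval_C, algebraMap_eq]
    have hchain : C dd * hbp = C dd * (U * σg) := by
      calc C dd * hbp = jac Gb := hGbjac.symm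
      _ = aeval Fm (jac nR) * (C dd * σg * jac nP) := by rw [e1, e2, e3]
      _ = C dd * (U * σg) := by rw [hU]; ring
    exact mul_left_cancel₀ hCdd hchain
  have hUV : U * V = 1 := by
    have hmv : aeval Fm (aeval nR (jac nS)) * aeval Fm (jac nR) = 1 := by
      rw [← map_mul, show aeval nR (jac nS) * jac nR = 1 from hvR, map_one]
    calc U * V = (aeval Fm (aeval nR (jac nS)) * aeval Fm (jac nR)) *
        (aeval nP (jac nQ) * jac nP) := by rw [hU, hV]; ring
    _ = 1 := by rw [hmv, hwP, one_mul]
  -- derivative computations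
  have hg0 : pderiv 0 g = -(((α+1+1:ℕ):RR) * X 0 ^ (α+1)) := by
    rw [hg]
    simp [pderiv_pow, pderiv_X_of_ne (show (1:Fin 2) ≠ 0 by decide)]
  have hg1 : pderiv 1 g = ((δ+2:ℕ):RR) * X 1 ^ (δ+1) := by
    rw [hg]
    simp [pderiv_pow, pderiv_X_of_ne (show (0:Fin 2) ≠ 1 by decide)]
  have hbp0 : pderiv 0 hbp = -(((α+γ+2+1:ℕ):RR) * X 0 ^ (α+γ+2)) := by
    rw [hhbp]
    simp [pderiv_pow, pderiv_X_of_ne (show (1:Fin 2) ≠ 0 by decide)]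
  have hbp1 : pderiv 1 hbp = ((δ+2:ℕ):RR) * X 1 ^ (δ+1) := by
    rw [hhbp]
    simp [pderiv_pow, pderiv_X_of_ne (show (0:Fin 2) ≠ 1 by decide)]
  -- the two Milnor ideals
  set Ja : Ideal RR := Ideal.span {(X 0:RR) ^ (α+1), X 1 ^ (δ+1)} with hJa
  set Jb : Ideal RR := Ideal.span {(X 0:RR) ^ (α+γ+2), X 1 ^ (δ+1)} with hJb
  have hgen0b : (X 0:RR) ^ (α+γ+2) ∈ Jb := Ideal.subset_span (by simp)
  have hgen1b : (X 1:RR) ^ (δ+1) ∈ Jb := Ideal.subset_span (by simp)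
  have hgen0a : (X 0:RR) ^ (α+1) ∈ Ja := Ideal.subset_span (by simp)
  have hgen1a : (X 1:RR) ^ (δ+1) ∈ Ja := Ideal.subset_span (by simp)
  -- membership of the various polynomials
  have hhbJb : hbp ∈ Jb := by
    rw [hhbp]
    refine Ideal.sub_mem _ ?_ ?_
    · rw [show δ+2 = δ+1+1 from rfl, pow_succ]
      exact Ideal.mul_mem_right _ _ hgen1b
    · rw [pow_succ]
      exact Ideal.mul_mem_right _ _ hgen0b
  have hσgJb : σg ∈ Jb := by
    have h1 : σg = V * hbp := by
      calc σg = (U * V) * σg := by rw [hUV, one_mul]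
      _ = V * (U * σg) := by ring
      _ = V * hbp := by rw [← hbeq]
    rw [h1]; exact Ideal.mul_mem_left _ _ hhbJb
  have hchainσ : ∀ i, pderiv i σg = A * pderiv i (nP 0) + B * pderiv i (nP 1) := by
    intro i; rw [hσg]; exact pderiv_aeval' i nP g
  have hLb : ∀ i, pderiv i hbp =
      pderiv i U * σg + U * (A * pderiv i (nP 0) + B * pderiv i (nP 1)) := by
    intro i; rw [hbeq, pderiv_mul, hchainσ i]
  set D0 : RR := pderiv 0 hbp - pderiv 0 U * σg with hD0
  set D1 : RR := pderiv 1 hbp - pderiv 1 U * σg with hD1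
  have hD0Jb : D0 ∈ Jb := by
    rw [hD0]
    refine Ideal.sub_mem _ ?_ (Ideal.mul_mem_left _ _ hσgJb)
    rw [hbp0]
    exact neg_mem (Ideal.mul_mem_left _ _ hgen0b)
  have hD1Jb : D1 ∈ Jb := by
    rw [hD1]
    refine Ideal.sub_mem _ ?_ (Ideal.mul_mem_left _ _ hσgJb)
    rw [hbp1]
    exact Ideal.mul_mem_left _ _ hgen1b
  have hD0eq : D0 = U * (A * pderiv 0 (nP 0) + B * pderiv 0 (nP 1)) := by
    rw [hD0, hLb 0]; ring
  have hD1eq : D1 = U * (A * pderiv 1 (nP 0) + B * pderiv 1 (nP 1)) := by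
    rw [hD1, hLb 1]; ring
  have hwP' : aeval nP (jac nQ) *
      (pderiv 0 (nP 0) * pderiv 1 (nP 1) - pderiv 1 (nP 0) * pderiv 0 (nP 1)) = 1 := by
    simpa [jac] using hwP
  have hAJb : A ∈ Jb := by
    have hAeq : A = V * aeval nP (jac nQ) * (pderiv 1 (nP 1) * D0 - pderiv 0 (nP 1) * D1) := by
      linear_combination (-(V * aeval nP (jac nQ) * pderiv 1 (nP 1))) * hD0eq +
        (V * aeval nP (jac nQ) * pderiv 0 (nP 1)) * hD1eq -
        (A * aeval nP (jac nQ) *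
          (pderiv 0 (nP 0) * pderiv 1 (nP 1) - pderiv 1 (nP 0) * pderiv 0 (nP 1))) * hUV -
        A * hwP'
    rw [hAeq]
    exact Ideal.mul_mem_left _ _
      (Ideal.sub_mem _ (Ideal.mul_mem_left _ _ hD0Jb) (Ideal.mul_mem_left _ _ hD1Jb))
  have hBJb : B ∈ Jb := by
    have hBeq : B = V * aeval nP (jac nQ) * (pderiv 0 (nP 0) * D1 - pderiv 1 (nP 0) * D0) := by
      linear_combination (-(V * aeval nP (jac nQ) * pderiv 0 (nP 0))) * hD1eq +
        (V * aeval nP (jac nQ) * pderiv 1 (nP 0)) * hD0eq -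
        (B * aeval nP (jac nQ) *
          (pderiv 0 (nP 0) * pderiv 1 (nP 1) - pderiv 1 (nP 0) * pderiv 0 (nP 1))) * hUV -
        B * hwP'
    rw [hBeq]
    exact Ideal.mul_mem_left _ _
      (Ideal.sub_mem _ (Ideal.mul_mem_left _ _ hD1Jb) (Ideal.mul_mem_left _ _ hD0Jb))
  -- members of Ja
  have hgJa : g ∈ Ja := by
    rw [hg]
    refine Ideal.sub_mem _ ?_ ?_
    · rw [show δ+2 = δ+1+1 from rfl, pow_succ]
      exact Ideal.mul_mem_right _ _ hgen1a
    · rw [pow_succ]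
      exact Ideal.mul_mem_right _ _ hgen0a
  have hg0Ja : pderiv 0 g ∈ Ja := by
    rw [hg0]
    exact neg_mem (Ideal.mul_mem_left _ _ hgen0a)
  have hg1Ja : pderiv 1 g ∈ Ja := by
    rw [hg1]
    exact Ideal.mul_mem_left _ _ hgen1a
  -- scalar identities extracting pure powers from derivatives
  have hXa : (X 0:RR) ^ (α+1) = C (-(((α+1+1:ℕ):ℂ))⁻¹) * pderiv 0 g := by
    have hc : (-(((α+1+1:ℕ):ℂ))⁻¹) * (-(((α+1+1:ℕ):ℂ))) = 1 := by
      rw [neg_mul_neg]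
      exact inv_mul_cancel₀ (by exact_mod_cast Nat.succ_ne_zero (α+1))
    calc (X 0:RR) ^ (α+1)
        = C ((-(((α+1+1:ℕ):ℂ))⁻¹) * (-(((α+1+1:ℕ):ℂ)))) * X 0 ^ (α+1) := by
          rw [hc, C_1, one_mul]
      _ = C (-(((α+1+1:ℕ):ℂ))⁻¹) * (-(C (((α+1+1:ℕ):ℂ)) * X 0 ^ (α+1))) := by
          simp only [C_mul, map_neg]; ring
      _ = C (-(((α+1+1:ℕ):ℂ))⁻¹) * pderiv 0 g := by
          rw [hg0, C_eq_coe_nat]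
  have hX1 : (X 1:RR) ^ (δ+1) = C ((((δ+2:ℕ):ℂ))⁻¹) * pderiv 1 g := by
    have hc : ((((δ+2:ℕ):ℂ))⁻¹) * (((δ+2:ℕ):ℂ)) = 1 :=
      inv_mul_cancel₀ (by exact_mod_cast Nat.succ_ne_zero (δ+1))
    calc (X 1:RR) ^ (δ+1)
        = C (((((δ+2:ℕ):ℂ))⁻¹) * (((δ+2:ℕ):ℂ))) * X 1 ^ (δ+1) := by
          rw [hc, C_1, one_mul]
      _ = C ((((δ+2:ℕ):ℂ))⁻¹) * (C (((δ+2:ℕ):ℂ)) * X 1 ^ (δ+1)) := by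
          rw [C_mul]; ring
      _ = C ((((δ+2:ℕ):ℂ))⁻¹) * pderiv 1 g := by
          rw [hg1, C_eq_coe_nat]
  have hXb : (X 0:RR) ^ (α+γ+2) = C (-(((α+γ+2+1:ℕ):ℂ))⁻¹) * pderiv 0 hbp := by
    have hc : (-(((α+γ+2+1:ℕ):ℂ))⁻¹) * (-(((α+γ+2+1:ℕ):ℂ))) = 1 := by
      rw [neg_mul_neg]
      exact inv_mul_cancel₀ (by exact_mod_cast Nat.succ_ne_zero (α+γ+2))
    calc (X 0:RR) ^ (α+γ+2)
        = C ((-(((α+γ+2+1:ℕ):ℂ))⁻¹) * (-(((α+γ+2+1:ℕ):ℂ)))) * X 0 ^ (α+γ+2) := by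
          rw [hc, C_1, one_mul]
      _ = C (-(((α+γ+2+1:ℕ):ℂ))⁻¹) * (-(C (((α+γ+2+1:ℕ):ℂ)) * X 0 ^ (α+γ+2))) := by
          simp only [C_mul, map_neg]; ring
      _ = C (-(((α+γ+2+1:ℕ):ℂ))⁻¹) * pderiv 0 hbp := by
          rw [hbp0, C_eq_coe_nat]
  have hX1b : (X 1:RR) ^ (δ+1) = C ((((δ+2:ℕ):ℂ))⁻¹) * pderiv 1 hbp := by
    rw [hbp1, ← hg1, ← hX1]
  -- σ of the Ja generators lies in Jb
  have hσX0 : aeval nP ((X 0:RR) ^ (α+1)) ∈ Jb := by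
    rw [hXa, map_mul, aeval_C, algebraMap_eq]
    exact Ideal.mul_mem_left _ _ hAJb
  have hσX1 : aeval nP ((X 1:RR) ^ (δ+1)) ∈ Jb := by
    rw [hX1, map_mul, aeval_C, algebraMap_eq]
    exact Ideal.mul_mem_left _ _ hBJb
  -- τ of the Jb generators lies in Ja
  have hτpd : ∀ i, aeval nQ (pderiv i hbp) ∈ Ja := by
    intro i
    rw [hLb i]
    have t1 : aeval nQ σg = g := hτσ g
    have t2 : aeval nQ A = pderiv 0 g := hτσ _
    have t3 : aeval nQ B = pderiv 1 g := hτσ _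
    simp only [map_add, map_mul, t1, t2, t3]
    refine Ideal.add_mem _ (Ideal.mul_mem_left _ _ hgJa) (Ideal.mul_mem_left _ _ ?_)
    exact Ideal.add_mem _ (Ideal.mul_mem_right _ _ hg0Ja) (Ideal.mul_mem_right _ _ hg1Ja)
  have hτX0 : aeval nQ ((X 0:RR) ^ (α+γ+2)) ∈ Ja := by
    rw [hXb, map_mul, aeval_C, algebraMap_eq]
    exact Ideal.mul_mem_left _ _ (hτpd 0)
  have hτX1 : aeval nQ ((X 1:RR) ^ (δ+1)) ∈ Ja := by
    rw [hX1b, map_mul, aeval_C, algebraMap_eq]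
    exact Ideal.mul_mem_left _ _ (hτpd 1)
  -- the transfer principle
  have htrans : ∀ z : RR, z ∈ Jb ↔ aeval nQ z ∈ Ja := by
    intro z
    constructor
    · intro hz
      rw [hJb, Ideal.mem_span_pair] at hz
      obtain ⟨u, v, huv⟩ := hz
      rw [← huv]
      simp only [map_add, map_mul]
      exact Ideal.add_mem _ (Ideal.mul_mem_left _ _ hτX0) (Ideal.mul_mem_left _ _ hτX1)
    · intro hz
      rw [show z = aeval nP (aeval nQ z) from (hστ z).symm]
      rw [hJa, Ideal.mem_span_pair] at hz
      obtain ⟨u, v, huv⟩ := hz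
      rw [← huv]
      simp only [map_add, map_mul]
      exact Ideal.add_mem _ (Ideal.mul_mem_left _ _ hσX0) (Ideal.mul_mem_left _ _ hσX1)
  -- final contradiction
  have hqXY : (X 0 + X 1 : RR) ∈ Ideal.span {(X 0:RR), X 1} :=
    add_mem (Ideal.subset_span (by simp)) (Ideal.subset_span (by simp))
  have hq1 : (X 0 + X 1:RR) ^ (α+γ+1+δ+1) ∈ Jb := by
    have h := pow_mem_span (M := α+γ+1) (N := δ) hqXY
    rw [hJb]
    simpa only [show α+γ+1+1 = α+γ+2 from by omega] using h
  have hp1 : (aeval nQ (X 0 + X 1:RR)) ^ (α+γ+1+δ+1) ∈ Ja := by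
    have h := (htrans _).1 hq1
    rwa [map_pow] at h
  have hccp : constantCoeff (aeval nQ (X 0 + X 1:RR)) = 0 := by
    have h0 := cc_zero_of_mem (M := α) (N := δ) (by rw [hJa] at hp1; exact hp1)
    rw [map_pow] at h0
    exact pow_eq_zero_iff (by omega) |>.1 h0
  have hpXY : aeval nQ (X 0 + X 1:RR) ∈ Ideal.span {(X 0:RR), X 1} :=
    mem_span_X_of_cc_zero _ hccp
  have hp2 : (aeval nQ (X 0 + X 1:RR)) ^ (α+δ+1) ∈ Ja := by
    rw [hJa]
    exact pow_mem_span (M := α) (N := δ) hpXY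
  have hp3 : (aeval nQ (X 0 + X 1:RR)) ^ (α+γ+1+δ) ∈ Ja := by
    rw [show α+γ+1+δ = (α+δ+1)+γ from by omega, pow_add]
    exact Ideal.mul_mem_right _ _ hp2
  have hq2 : (X 0 + X 1:RR) ^ (α+γ+1+δ) ∈ Jb := by
    rw [htrans, map_pow]
    exact hp3
  refine notMem_witness (α+γ+1) δ ?_
  rw [hJb] at hq2
  simpa only [show α+γ+1+1 = α+γ+2 from by omega] using hq2

end StmtFiveAux

theorem stmt_5 (d a b : ℕ) (hd : 3 ≤ d) (ha : 2 ≤ a) (hb : 2 ≤ b) (hab : a ≠ b) :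
    ¬ ∃ Φ₁ Φ₂ : ℂ × ℂ ≃ ℂ × ℂ, IsPolyAut Φ₁ ∧ IsPolyAut Φ₂ ∧
      ∀ p : ℂ × ℂ,
        (p.1, p.2 ^ d - (d : ℂ) * p.1 ^ b * p.2) =
          Φ₂ ((fun q : ℂ × ℂ => (q.1, q.2 ^ d - (d : ℂ) * q.1 ^ a * q.2)) (Φ₁ p)) := by
  rcases Nat.lt_or_ge a b with hab' | hge
  · obtain ⟨δ, rfl⟩ : ∃ δ, d = δ + 3 := ⟨d - 3, by omega⟩
    obtain ⟨α, rfl⟩ : ∃ α, a = α + 2 := ⟨a - 2, by omega⟩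
    obtain ⟨γ, rfl⟩ : ∃ γ, b = α + γ + 3 := ⟨b - α - 3, by omega⟩
    exact key δ α γ
  · have hlt : b < a := lt_of_le_of_ne hge fun h => hab h.symm
    obtain ⟨δ, rfl⟩ : ∃ δ, d = δ + 3 := ⟨d - 3, by omega⟩
    obtain ⟨α, rfl⟩ : ∃ α, b = α + 2 := ⟨b - 2, by omega⟩
    obtain ⟨γ, rfl⟩ : ∃ γ, a = α + γ + 3 := ⟨a - α - 3, by omega⟩
    rintro ⟨Φ₁, Φ₂, h₁, h₂, heq⟩
    apply key δ α γ
    refine ⟨Φ₁.symm, Φ₂.symm, ⟨h₁.2, h₁.1⟩, ⟨h₂.2, h₂.1⟩, ?_⟩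
    intro p
    have h := heq (Φ₁.symm p)
    rw [Equiv.apply_symm_apply] at h
    simp only at h ⊢
    rw [h, Equiv.symm_apply_apply]
end

section
/- The maps f₁(x,y) = (x, y²) and f₂(x,y) = (x, y² + x) are equivalent (i.e., f₂ = Φ₂ ∘ f₁ ∘ Φ₁ for some polynomial automorphisms Φ₁, Φ₂ of ℂ²), but they are not conjugate: there is no polynomial automorphism Φ of ℂ² with f₂ = Φ⁻¹ ∘ f₁ ∘ Φ. -/
/-- The shear automorphism `(x,y) ↦ (x, y + x)`. -/
def shearAut : ℂ × ℂ ≃ ℂ × ℂ where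
  toFun p := (p.1, p.2 + p.1)
  invFun p := (p.1, p.2 - p.1)
  left_inv p := by simp
  right_inv p := by simp

open MvPolynomial in
lemma isPolyAut_refl : IsPolyAut (Equiv.refl (ℂ × ℂ)) := by
  constructor <;>
    exact ⟨X 0, X 1, fun p => by simp⟩

open MvPolynomial in
lemma isPolyAut_shear : IsPolyAut shearAut := by
  constructor
  · exact ⟨X 0, X 1 + X 0, fun p => by simp [shearAut]⟩
  · exact ⟨X 0, X 1 - X 0, fun p => by simp [shearAut]⟩

/-- The maps `f₁(x,y) = (x, y²)` and `f₂(x,y) = (x, y² + x)` are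
equivalent (i.e. `f₂ = Φ₂ ∘ f₁ ∘ Φ₁` for some polynomial automorphisms), but
they are not conjugate: there is no polynomial automorphism `Φ` of `ℂ²` with
`f₂ = Φ⁻¹ ∘ f₁ ∘ Φ`. -/
theorem stmt_6 :
    (∃ Φ₁ Φ₂ : ℂ × ℂ ≃ ℂ × ℂ, IsPolyAut Φ₁ ∧ IsPolyAut Φ₂ ∧
      ∀ p : ℂ × ℂ, (p.1, p.2 ^ 2 + p.1) = Φ₂ ((Φ₁ p).1, (Φ₁ p).2 ^ 2)) ∧
    ¬ ∃ Φ : ℂ × ℂ ≃ ℂ × ℂ, IsPolyAut Φ ∧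
      ∀ p : ℂ × ℂ, (p.1, p.2 ^ 2 + p.1) = Φ.symm ((Φ p).1, (Φ p).2 ^ 2) := by
  constructor
  · exact ⟨Equiv.refl _, shearAut, isPolyAut_refl, isPolyAut_shear,
      fun p => by simp [shearAut]⟩
  · rintro ⟨Φ, ⟨⟨P, Q, hPQ⟩, _⟩, h⟩
    -- Every point `(t - t², t)` is a fixed point of `f₂`.
    have hfix : ∀ t : ℂ, (Φ (t - t ^ 2, t)).2 ^ 2 = (Φ (t - t ^ 2, t)).2 := by
      intro t
      have h1 := h (t - t ^ 2, t)
      simp only at h1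
      have h2 : ((t - t ^ 2 : ℂ), t ^ 2 + (t - t ^ 2)) = ((t - t ^ 2 : ℂ), t) := by
        ring_nf
      rw [h2] at h1
      have h3 : Φ (t - t ^ 2, t) = ((Φ (t - t ^ 2, t)).1, (Φ (t - t ^ 2, t)).2 ^ 2) := by
        conv_lhs => rw [h1]
        exact (Φ.apply_symm_apply _)
      exact (congrArg Prod.snd h3).symm
    -- The second coordinate of `t ↦ Φ (t - t², t)` is a polynomial in `t`.
    set q : Polynomial ℂ :=
      MvPolynomial.aeval ![Polynomial.X - Polynomial.X ^ 2, Polynomial.X] Q with hq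
    have hqe : ∀ t : ℂ, q.eval t = (Φ (t - t ^ 2, t)).2 := by
      intro t
      have := hPQ (t - t ^ 2, t)
      have h2 : (Φ (t - t ^ 2, t)).2 = MvPolynomial.eval ![t - t ^ 2, t] Q := by
        rw [this]
      have h5 := MvPolynomial.eval₂_comp_left (Polynomial.evalRingHom t)
        (algebraMap ℂ (Polynomial ℂ)) ![Polynomial.X - Polynomial.X ^ 2, Polynomial.X] Q
      have e1 : (Polynomial.evalRingHom t).comp (algebraMap ℂ (Polynomial ℂ)) =
          RingHom.id ℂ := by ext x; simp
      have e2 : ⇑(Polynomial.evalRingHom t) ∘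
          ![Polynomial.X - Polynomial.X ^ 2, Polynomial.X] = ![t - t ^ 2, t] := by
        funext i; fin_cases i <;> simp
      rw [e1, e2] at h5
      rw [h2, hq, MvPolynomial.aeval_def]
      rw [show Polynomial.eval t = ⇑(Polynomial.evalRingHom t) from rfl, h5]
      rfl
    -- `q² = q` as polynomials, so `q = 0` or `q = 1`.
    have hq2 : q * q = q := by
      apply Polynomial.funext
      intro t
      simp only [Polynomial.eval_mul]
      rw [hqe t]
      rw [← sq]
      exact hfix t
    have hq01 : q = 0 ∨ q = 1 := by
      have : q * (q - 1) = 0 := by linear_combination hq2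
      rcases mul_eq_zero.mp this with h0 | h1
      · exact Or.inl h0
      · exact Or.inr (by linear_combination h1)
    -- `Φ.symm (0,0)` and `Φ.symm (0,1)` are fixed points of `f₂`, giving values 0 and 1.
    have key : ∀ u : ℂ × ℂ, u.2 ^ 2 = u.2 → ∃ t : ℂ, (Φ (t - t ^ 2, t)).2 = u.2 := by
      intro u hu
      set p := Φ.symm u with hp
      have h1 := h p
      have h2 : ((Φ p).1, (Φ p).2 ^ 2) = u := by
        rw [hp, Φ.apply_symm_apply, hu]
      rw [h2, ← hp] at h1
      -- h1 : (p.1, p.2 ^ 2 + p.1) = p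
      have hx : p.1 = p.2 - p.2 ^ 2 := by
        have h4 := congrArg Prod.snd h1
        simp only at h4
        linear_combination h4
      refine ⟨p.2, ?_⟩
      have hpp : (p.2 - p.2 ^ 2, p.2) = p := by
        rw [← hx]
      rw [hpp, hp, Φ.apply_symm_apply]
    obtain ⟨t0, ht0⟩ := key (0, 0) (by norm_num)
    obtain ⟨t1, ht1⟩ := key (0, 1) (by norm_num)
    rcases hq01 with h0 | h1
    · have := hqe t1; rw [h0, ht1] at this; simp at this
    · have := hqe t0; rw [h1, ht0] at this; simp at this
end

section
/- The polynomials a₄(x,y) = x⁴ + (4ξ − 2)x²y² + y⁴ (where ξ = exp(2πi/6)) and b₆(x,y) = x⁵y − xy⁵ are algebraically independent over ℂ, and the product of their degrees equals 24, the order of the complex reflection group G₄ ≅ SL₂(𝔽₃). -/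
open MvPolynomial

private lemma lemA {f g : Polynomial ℂ} (hf : f.Monic) (hg : g.Monic)
    (hf4 : f.natDegree = 4) (hg5 : g.natDegree = 5)
    (S : Finset (Fin 2 →₀ ℕ)) (c : (Fin 2 →₀ ℕ) → ℂ)
    (hinj : Set.InjOn (fun p : Fin 2 →₀ ℕ => 4 * p 0 + 5 * p 1) S)
    (hsum : ∑ p ∈ S, Polynomial.C (c p) * (f ^ p 0 * g ^ p 1) = 0) :
    ∀ p ∈ S, c p = 0 := by
  by_contra hcon
  push_neg at hcon
  obtain ⟨p₀, hp₀S, hp₀⟩ := hcon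
  set T : Finset (Fin 2 →₀ ℕ) := S.filter (fun p => c p ≠ 0) with hT
  have hTne : T.Nonempty := ⟨p₀, Finset.mem_filter.2 ⟨hp₀S, hp₀⟩⟩
  set d : (Fin 2 →₀ ℕ) → ℕ := fun p : Fin 2 →₀ ℕ => 4 * p 0 + 5 * p 1 with hd
  obtain ⟨q, hqT, hqmax⟩ := T.exists_max_image d hTne
  have hdeg : ∀ p : Fin 2 →₀ ℕ, (f ^ p 0 * g ^ p 1).natDegree = d p := by
    intro p
    rw [(hf.pow _).natDegree_mul (hg.pow _), hf.natDegree_pow, hg.natDegree_pow, hf4, hg5]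
    ring
  have hmonic : ∀ p : Fin 2 →₀ ℕ, (f ^ p 0 * g ^ p 1).Monic := fun p => (hf.pow _).mul (hg.pow _)
  have := congrArg (fun r => Polynomial.coeff r (d q)) hsum
  simp only [Polynomial.finset_sum_coeff, Polynomial.coeff_zero, Polynomial.coeff_C_mul] at this
  rw [Finset.sum_eq_single_of_mem q (Finset.mem_filter.1 hqT).1] at this
  · rw [← hdeg q, (hmonic q).coeff_natDegree, mul_one] at this
    exact (Finset.mem_filter.1 hqT).2 this
  · intro p hpS hpq
    rcases eq_or_ne (c p) 0 with h | h
    · simp [h]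
    · have hpT : p ∈ T := Finset.mem_filter.2 ⟨hpS, h⟩
      have hlt : d p < d q := lt_of_le_of_ne (hqmax p hpT)
        (fun he => hpq (hinj hpS (Finset.mem_filter.1 hqT).1 he))
      rw [Polynomial.coeff_eq_zero_of_natDegree_lt (hdeg p ▸ hlt), mul_zero]

private lemma indep_aux (c' : ℂ) (P : MvPolynomial (Fin 2) ℂ)
    (hP : MvPolynomial.aeval
      (![Polynomial.C (Polynomial.X ^ 4 + Polynomial.C c' * Polynomial.X ^ 2 + 1) * Polynomial.X ^ 4,
         Polynomial.C (Polynomial.X ^ 5 - Polynomial.X) * Polynomial.X ^ 6] :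
        Fin 2 → Polynomial (Polynomial ℂ)) P = 0) :
    P = 0 := by
  set f : Polynomial ℂ := Polynomial.X ^ 4 + Polynomial.C c' * Polynomial.X ^ 2 + 1 with hfdef
  set g : Polynomial ℂ := Polynomial.X ^ 5 - Polynomial.X with hgdef
  have hf : f.Monic := by unfold f; monicity!
  have hg : g.Monic := by unfold g; monicity!
  have hf4 : f.natDegree = 4 := by unfold f; compute_degree!
  have hg5 : g.natDegree = 5 := by unfold g; compute_degree!
  ext d
  simp only [MvPolynomial.coeff_zero]
  set n := 4 * d 0 + 6 * d 1 with hn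
  rw [MvPolynomial.aeval_def, MvPolynomial.eval₂_eq'] at hP
  have hterm : ∀ e : Fin 2 →₀ ℕ,
      (∏ i, (![Polynomial.C f * Polynomial.X ^ 4, Polynomial.C g * Polynomial.X ^ 6] :
        Fin 2 → Polynomial (Polynomial ℂ)) i ^ e i)
      = Polynomial.C (f ^ e 0 * g ^ e 1) * Polynomial.X ^ (4 * e 0 + 6 * e 1) := by
    intro e
    rw [Fin.prod_univ_two]
    simp only [Matrix.cons_val_zero, Matrix.cons_val_one, Matrix.head_cons, mul_pow,
      ← Polynomial.C_pow, ← pow_mul, Polynomial.C_mul]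
    ring
  simp only [hterm] at hP
  have h2 := congrArg (fun r => Polynomial.coeff r n) hP
  simp only [Polynomial.finset_sum_coeff, Polynomial.coeff_zero,
    Polynomial.algebraMap_apply, MvPolynomial.algebraMap_eq, ← mul_assoc,
    ← Polynomial.C_mul, Polynomial.coeff_C_mul, Polynomial.coeff_X_pow,
    mul_ite, mul_one, mul_zero] at h2
  rw [← Finset.sum_filter] at h2
  have key := lemA hf hg hf4 hg5
    (P.support.filter (fun e : Fin 2 →₀ ℕ => n = 4 * e 0 + 6 * e 1))
    (fun e => MvPolynomial.coeff e P) ?_ ?_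
  · by_cases hd : d ∈ P.support
    · exact key d (Finset.mem_filter.2 ⟨hd, hn⟩)
    · exact MvPolynomial.notMem_support_iff.1 hd
  · intro p hp q hq hpq
    simp only [Finset.coe_filter, Set.mem_setOf_eq] at hp hq
    simp only at hpq
    have h1 : p 0 = q 0 ∧ p 1 = q 1 := by omega
    ext i
    fin_cases i
    · exact h1.1
    · exact h1.2
  · rw [← h2]
    apply Finset.sum_congr rfl
    intro e he
    simp [mul_assoc]

/-- The polynomials `a₄(x,y) = x⁴ + (4ξ−2)x²y² + y⁴` (where
`ξ = exp(2πi/6)`) and `b₆(x,y) = x⁵y − xy⁵` are algebraically independent over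
`ℂ`, and the product of their degrees equals `24`, the order of the complex
reflection group `G₄ ≅ SL₂(𝔽₃)`. -/
theorem stmt_16 (ξ : ℂ) (hξ : ξ = Complex.exp (2 * Real.pi * Complex.I / 6))
    (a4 b6 : MvPolynomial (Fin 2) ℂ)
    (ha4 : a4 = X 0 ^ 4 + C (4 * ξ - 2) * X 0 ^ 2 * X 1 ^ 2 + X 1 ^ 4)
    (hb6 : b6 = X 0 ^ 5 * X 1 - X 0 * X 1 ^ 5) :
    AlgebraicIndependent ℂ ![a4, b6] ∧
    a4.totalDegree * b6.totalDegree = 24 ∧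
    Nat.card (Matrix.SpecialLinearGroup (Fin 2) (ZMod 3)) = 24 := by
  set c' : ℂ := 4 * ξ - 2 with hc'
  set v : Fin 2 → Polynomial (Polynomial ℂ) :=
    ![Polynomial.C Polynomial.X * Polynomial.X, Polynomial.X] with hv
  have hΦa4 : MvPolynomial.aeval v a4
      = Polynomial.C (Polynomial.X ^ 4 + Polynomial.C c' * Polynomial.X ^ 2 + 1)
        * Polynomial.X ^ 4 := by
    rw [ha4]
    simp [hv, MvPolynomial.algebraMap_eq]
    ring
  have hΦb6 : MvPolynomial.aeval v b6
      = Polynomial.C (Polynomial.X ^ 5 - Polynomial.X) * Polynomial.X ^ 6 := by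
    rw [hb6]
    simp [hv]
    ring
  refine ⟨?_, ?_, ?_⟩
  · rw [algebraicIndependent_iff]
    intro P hP
    apply indep_aux c' P
    have h := (MvPolynomial.comp_aeval_apply (f := ![a4, b6]) (MvPolynomial.aeval v) P).symm
    rw [hP, map_zero] at h
    have hfun : (fun i => (MvPolynomial.aeval v) (![a4, b6] i))
        = ![Polynomial.C (Polynomial.X ^ 4 + Polynomial.C c' * Polynomial.X ^ 2 + 1)
              * Polynomial.X ^ 4,
            Polynomial.C (Polynomial.X ^ 5 - Polynomial.X) * Polynomial.X ^ 6] := by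
      funext i
      fin_cases i
      · simpa using hΦa4
      · simpa using hΦb6
    rw [hfun] at h
    exact h
  · have hda : a4.totalDegree = 4 := by
      rw [ha4]
      apply le_antisymm
      · refine (totalDegree_add _ _).trans ?_
        refine max_le ((totalDegree_add _ _).trans (max_le ?_ ?_)) ?_
        · simp [totalDegree_X_pow]
        · refine (totalDegree_mul _ _).trans ?_
          refine le_trans (add_le_add (totalDegree_mul _ _) le_rfl) ?_
          simp [totalDegree_X_pow, totalDegree_C]
        · simp [totalDegree_X_pow]
      · have hco : MvPolynomial.coeff (Finsupp.single 1 4)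
            (X 0 ^ 4 + C c' * X 0 ^ 2 * X 1 ^ 2 + X 1 ^ 4 : MvPolynomial (Fin 2) ℂ) = 1 := by
          have hmid : (C c' * X 0 ^ 2 * X 1 ^ 2 : MvPolynomial (Fin 2) ℂ)
              = monomial (Finsupp.single 0 2 + Finsupp.single 1 2) c' := by
            rw [X_pow_eq_monomial, X_pow_eq_monomial, C_mul_monomial, monomial_mul]
            simp
          rw [coeff_add, coeff_add, hmid, coeff_monomial, coeff_X_pow, coeff_X_pow]
          have h1 : ¬ (Finsupp.single (0:Fin 2) 4 = Finsupp.single 1 4) := by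
            intro h; have := DFunLike.congr_fun h 0; simp [Finsupp.single_apply] at this
          have h2 : ¬ (Finsupp.single (0:Fin 2) 2 + Finsupp.single 1 2
              = Finsupp.single 1 4) := by
            intro h; have := DFunLike.congr_fun h 0; simp [Finsupp.single_apply] at this
          simp [h1, h2]
        have hsupp : (Finsupp.single (1:Fin 2) 4) ∈
            (X 0 ^ 4 + C c' * X 0 ^ 2 * X 1 ^ 2 + X 1 ^ 4 : MvPolynomial (Fin 2) ℂ).support := by
          rw [MvPolynomial.mem_support_iff, hco]; exact one_ne_zero
        have := MvPolynomial.le_totalDegree hsupp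
        simpa [Finsupp.sum_single_index] using this
    have hdb : b6.totalDegree = 6 := by
      rw [hb6]
      apply le_antisymm
      · rw [sub_eq_add_neg]
        refine (totalDegree_add _ _).trans (max_le ?_ ?_)
        · refine (totalDegree_mul _ _).trans ?_
          simp [totalDegree_X_pow, totalDegree_X]
        · rw [totalDegree_neg]
          refine (totalDegree_mul _ _).trans ?_
          simp [totalDegree_X_pow, totalDegree_X]
      · have hco : MvPolynomial.coeff (Finsupp.single 0 5 + Finsupp.single 1 1)
            (X 0 ^ 5 * X 1 - X 0 * X 1 ^ 5 : MvPolynomial (Fin 2) ℂ) = 1 := by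
          have e1 : (X 0 ^ 5 * X 1 : MvPolynomial (Fin 2) ℂ)
              = monomial (Finsupp.single 0 5 + Finsupp.single 1 1) 1 := by
            rw [X_pow_eq_monomial, X, monomial_mul]; simp
          have e2 : (X 0 * X 1 ^ 5 : MvPolynomial (Fin 2) ℂ)
              = monomial (Finsupp.single 0 1 + Finsupp.single 1 5) 1 := by
            rw [X_pow_eq_monomial, X, monomial_mul]; simp
          rw [coeff_sub, e1, e2, coeff_monomial, coeff_monomial]
          have h2 : ¬ (Finsupp.single (0:Fin 2) 1 + Finsupp.single 1 5
              = Finsupp.single 0 5 + Finsupp.single 1 1) := by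
            intro h; have := DFunLike.congr_fun h 0; simp [Finsupp.single_apply] at this
          simp [h2]
        have hsupp : (Finsupp.single (0:Fin 2) 5 + Finsupp.single 1 1) ∈
            (X 0 ^ 5 * X 1 - X 0 * X 1 ^ 5 : MvPolynomial (Fin 2) ℂ).support := by
          rw [MvPolynomial.mem_support_iff, hco]; exact one_ne_zero
        have := MvPolynomial.le_totalDegree hsupp
        simpa [Finsupp.sum_add_index, Finsupp.sum_single_index] using this
    rw [hda, hdb]
  · rw [Nat.card_eq_fintype_card]
    decide
end
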